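/- arXiv:1907.12207 — 3 statements merged into one kernel-verified Lean document; each statement's English description precedes it below -/
import Mathlib

section
/- Every global minimizer (b*, W*) of problem (P) satisfies, for every coordinate j ∈ {1,...,K}, W*_j = sign(U_j) · min{ M‖b*‖₂ , S_λ̄(|U_j|) }. -/
/-- Soft-thresholding operator `S_t(x) = sign(x) · max(|x| − t, 0)`. -/
noncomputable def st (t x : ℝ) : ℝ := Real.sign x * max (|x| - t) 0

/-- Euclidean (ℓ₂) norm on `ℝ^n`. -/
noncomputable def l2 {n : ℕ} (x : Fin n → ℝ) : ℝ := Real.sqrt (∑ i, (x i) ^ 2)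

/-- ℓ₁ norm on `ℝ^n`. -/
noncomputable def l1 {n : ℕ} (x : Fin n → ℝ) : ℝ := ∑ i, |x i|

/-- Objective of problem (P):
`½‖v − b‖₂² + ½‖U − W‖₂² + λ‖b‖₂ + λ̄‖W‖₁`. -/
noncomputable def objP {k K : ℕ} (lam lamb : ℝ) (v : Fin k → ℝ) (U : Fin K → ℝ)
    (b : Fin k → ℝ) (W : Fin K → ℝ) : ℝ :=
  (1 / 2) * ∑ i, (v i - b i) ^ 2 + (1 / 2) * ∑ j, (U j - W j) ^ 2 + lam * l2 b + lamb * l1 W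

/-!
Fix `b = b*`. The feasible set in `W` is then the box `‖W‖_∞ ≤ C := M‖b*‖₂` and the objective is a
sum of the scalar functions `w ↦ ½(U_j − w)² + λ̄|w|`, so each `W*_j` minimizes its own scalar
function over `[−C, C]`. That function is `1`-strongly convex, and the point
`s = sign(U_j) · min{C, S_λ̄(|U_j|)}` satisfies the variational inequality of the problem;
hence `f(x) − f(s) ≥ ½(x − s)²` on `[−C, C]`, which forces `W*_j = s`.
-/

lemma st_abs {t : ℝ} (ht : 0 ≤ t) (u : ℝ) : st t |u| = max (|u| - t) 0 := by
  rcases eq_or_ne u 0 with rfl | hu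
  · simp [st, ht]
  · rw [st, abs_abs, Real.sign_of_pos (abs_pos.mpr hu), one_mul]

lemma Finset.sum_apply_update_sub {ι : Type*} [Fintype ι] [DecidableEq ι]
    (g : ι → ℝ → ℝ) (W : ι → ℝ) (j : ι) (w : ℝ) :
    ∑ i, g i (Function.update W j w i) - ∑ i, g i (W i) = g j w - g j (W j) := by
  simp_rw [Function.apply_update g W j w]
  rw [Finset.sum_update_of_mem (Finset.mem_univ j),
    Finset.sum_eq_add_sum_sdiff_singleton_of_mem (Finset.mem_univ j) (fun i => g i (W i))]
  ring

lemma objP_update_sub {k K : ℕ} (lam lamb : ℝ) (v : Fin k → ℝ) (U : Fin K → ℝ)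
    (b : Fin k → ℝ) (W : Fin K → ℝ) (j : Fin K) (w : ℝ) :
    objP lam lamb v U b (Function.update W j w) - objP lam lamb v U b W =
      ((1 / 2) * (U j - w) ^ 2 + lamb * |w|) - ((1 / 2) * (U j - W j) ^ 2 + lamb * |W j|) := by
  have hsq := Finset.sum_apply_update_sub (fun i x => (U i - x) ^ 2) W j w
  have habs := Finset.sum_apply_update_sub (fun _ x => |x|) W j w
  simp only [objP, l1] at hsq habs ⊢
  linear_combination (1 / 2) * hsq + lamb * habs

lemma variational_ineq_min_max_of_nonneg {u t C x : ℝ} (hu : 0 ≤ u) (ht : 0 ≤ t) (hx : |x| ≤ C) :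
    0 ≤ (min C (max (u - t) 0) - u) * (x - min C (max (u - t) 0)) +
      t * (|x| - min C (max (u - t) 0)) := by
  obtain ⟨hxl, hxu⟩ := abs_le.mp hx
  have hx_abs := le_abs_self x
  rcases max_cases (u - t) 0 with ⟨hmax, hmax'⟩ | ⟨hmax, hmax'⟩ <;> rw [hmax] <;>
    rcases min_cases C (u - t) with ⟨hmin, hmin'⟩ | ⟨hmin, hmin'⟩ <;>
    rcases min_cases C 0 with ⟨hmin0, hmin0'⟩ | ⟨hmin0, hmin0'⟩ <;>
    simp only [hmin, hmin0] <;>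
    nlinarith [mul_nonneg ht (abs_nonneg x), mul_nonneg hu (sub_nonneg.mpr hx_abs)]

lemma variational_ineq_sign_mul_min_st {u t C x : ℝ} (ht : 0 ≤ t) (hx : |x| ≤ C) :
    0 ≤ (Real.sign u * min C (st t |u|) - u) * (x - Real.sign u * min C (st t |u|)) +
      t * (|x| - |Real.sign u * min C (st t |u|)|) := by
  have hC : 0 ≤ C := (abs_nonneg x).trans hx
  rw [st_abs ht]
  have hm : 0 ≤ min C (max (|u| - t) 0) := le_min hC (le_max_right _ _)
  rcases lt_trichotomy u 0 with hu | rfl | hu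
  · have h := variational_ineq_min_max_of_nonneg (neg_nonneg.mpr hu.le) ht (C := C) (x := -x)
      (by rwa [abs_neg])
    rw [abs_neg] at h
    rw [Real.sign_of_neg hu, neg_one_mul, abs_neg, abs_of_nonneg hm, abs_of_neg hu]
    linarith
  · simpa using mul_nonneg ht (abs_nonneg x)
  · rw [Real.sign_of_pos hu, one_mul, abs_of_nonneg hm, abs_of_pos hu]
    exact variational_ineq_min_max_of_nonneg hu.le ht hx

lemma eq_sign_mul_min_st_of_forall_le {u t C w : ℝ} (ht : 0 ≤ t) (hw : |w| ≤ C)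
    (hmin : ∀ x, |x| ≤ C → (1 / 2) * (u - w) ^ 2 + t * |w| ≤ (1 / 2) * (u - x) ^ 2 + t * |x|) :
    w = Real.sign u * min C (st t |u|) := by
  set s := Real.sign u * min C (st t |u|)
  have hs : |s| ≤ C := by
    have hm : 0 ≤ min C (st t |u|) :=
      le_min ((abs_nonneg w).trans hw) (by rw [st_abs ht]; exact le_max_right _ _)
    have hsign : |Real.sign u| ≤ 1 := by
      rcases Real.sign_apply_eq u with h | h | h <;> simp [h]
    calc |s| = |Real.sign u| * min C (st t |u|) := by rw [abs_mul, abs_of_nonneg hm]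
      _ ≤ 1 * C := mul_le_mul hsign (min_le_left _ _) hm zero_le_one
      _ = C := one_mul C
  have h := variational_ineq_sign_mul_min_st (u := u) ht hw
  -- strong convexity: `f w − f s = (s − u)(w − s) + t(|w| − |s|) + ½(w − s)²`
  have hsq : (w - s) ^ 2 ≤ 0 := by nlinarith [hmin s hs]
  nlinarith [sq_nonneg (w - s)]

theorem stmt0_general (k K : ℕ)
    (lam lamb M : ℝ) (hlamb : 0 ≤ lamb)
    (v : Fin k → ℝ) (U : Fin K → ℝ)
    (bstar : Fin k → ℝ) (Wstar : Fin K → ℝ)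
    (hfeas : ∀ j, |Wstar j| ≤ M * l2 bstar)
    (hmin : ∀ (b : Fin k → ℝ) (W : Fin K → ℝ), (∀ j, |W j| ≤ M * l2 b) →
      objP lam lamb v U bstar Wstar ≤ objP lam lamb v U b W) :
    ∀ j, Wstar j = Real.sign (U j) * min (M * l2 bstar) (st lamb |U j|) := by
  intro j
  refine eq_sign_mul_min_st_of_forall_le hlamb (hfeas j) fun w hw => ?_
  have hfeas_update : ∀ i, |Function.update Wstar j w i| ≤ M * l2 bstar := by
    intro i
    rcases eq_or_ne i j with rfl | hij
    · simpa using hw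
    · simpa [hij] using hfeas i
  have h := hmin bstar _ hfeas_update
  have hdiff := objP_update_sub lam lamb v U bstar Wstar j w
  linarith

/-- Every global minimizer `(b*, W*)` of problem (P) satisfies, for every coordinate `j`,
`W*_j = sign(U_j) · min{ M‖b*‖₂ , S_λ̄(|U_j|) }`. -/
theorem stmt0 (k K : ℕ) (hk : 1 ≤ k) (hK : 1 ≤ K)
    (lam lamb M : ℝ) (hlam : 0 ≤ lam) (hlamb : 0 ≤ lamb) (hM : 0 < M)
    (v : Fin k → ℝ) (U : Fin K → ℝ)
    (bstar : Fin k → ℝ) (Wstar : Fin K → ℝ)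
    (hfeas : ∀ j, |Wstar j| ≤ M * l2 bstar)
    (hmin : ∀ (b : Fin k → ℝ) (W : Fin K → ℝ), (∀ j, |W j| ≤ M * l2 b) →
      objP lam lamb v U bstar Wstar ≤ objP lam lamb v U b W) :
    ∀ j, Wstar j = Real.sign (U j) * min (M * l2 bstar) (st lamb |U j|) :=
  stmt0_general k K lam lamb M hlamb v U bstar Wstar hfeas hmin
end

section
/- Assume v ≠ 0. If s* ∈ {0,1,...,K} satisfies S_λ̄(|U_(s*+1)|) ≤ M‖b_{s*}‖₂ < S_λ̄(|U_(s*)|), then the pair (b, W) with b = b_{s*} and W_j = sign(U_j) · min{ M‖b_{s*}‖₂ , S_λ̄(|U_j|) } for each j is a global minimizer of problem (P). -/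
/-- `du U σ s = |U_(s)|`, the `s`-th largest absolute entry of `U` (1-based, via a sorting
permutation `σ`), with the out-of-range convention `|U_(s)| = 0` for `s > K`
(so that `S_λ̄(|U_(K+1)|) = 0`). -/
noncomputable def du {K : ℕ} (U : Fin K → ℝ) (σ : Equiv.Perm (Fin K)) (s : ℕ) : ℝ :=
  if h : s - 1 < K then |U (σ ⟨s - 1, h⟩)| else 0

/-- `a_s = λ − M·Σ_{i=1}^s (|U_(i)| − λ̄)`. -/
noncomputable def aseq {K : ℕ} (U : Fin K → ℝ) (σ : Equiv.Perm (Fin K))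
    (lam lamb M : ℝ) (s : ℕ) : ℝ :=
  lam - M * ∑ i ∈ Finset.Icc 1 s, (du U σ i - lamb)

/-- `b_s = (1/(1+sM²)) · max{1 − a_s/‖v‖₂, 0} · v`. -/
noncomputable def bvec {k K : ℕ} (U : Fin K → ℝ) (σ : Equiv.Perm (Fin K))
    (lam lamb M : ℝ) (v : Fin k → ℝ) (s : ℕ) : Fin k → ℝ :=
  fun i => (1 / (1 + (s : ℝ) * M ^ 2)) * max (1 - aseq U σ lam lamb M s / l2 v) 0 * v i

lemma l2_nonneg' {n : ℕ} (x : Fin n → ℝ) : 0 ≤ l2 x := Real.sqrt_nonneg _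

lemma l2_sq {n : ℕ} (x : Fin n → ℝ) : (l2 x)^2 = ∑ i, (x i)^2 :=
  Real.sq_sqrt (by positivity)

lemma l2_smul {n : ℕ} (c : ℝ) (x : Fin n → ℝ) (hc : 0 ≤ c) :
    l2 (fun i => c * x i) = c * l2 x := by
  unfold l2
  simp only [mul_pow]
  rw [← Finset.mul_sum, Real.sqrt_mul (sq_nonneg c), Real.sqrt_sq hc]

lemma l2_pos {n : ℕ} (x : Fin n → ℝ) (hx : x ≠ 0) : 0 < l2 x := by
  have h : ∃ i, x i ≠ 0 := by
    by_contra h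
    push_neg at h
    exact hx (funext h)
  obtain ⟨i, hi⟩ := h
  apply Real.sqrt_pos.2
  have : 0 < (x i)^2 := by positivity
  exact Finset.sum_pos' (fun j _ => sq_nonneg _) ⟨i, Finset.mem_univ i, this⟩

lemma cauchy {n : ℕ} (x y : Fin n → ℝ) : ∑ i, x i * y i ≤ l2 x * l2 y := by
  have h := Finset.sum_mul_sq_le_sq_mul_sq Finset.univ x y
  calc ∑ i, x i * y i ≤ |∑ i, x i * y i| := le_abs_self _
    _ = Real.sqrt ((∑ i, x i * y i)^2) := (Real.sqrt_sq_eq_abs _).symm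
    _ ≤ Real.sqrt ((∑ i, x i ^2) * ∑ i, y i ^2) := Real.sqrt_le_sqrt h
    _ = l2 x * l2 y := by rw [Real.sqrt_mul (by positivity)]; rfl

lemma st_nonneg_arg (t d : ℝ) (ht : 0 ≤ t) (hd : 0 ≤ d) :
    st t d = max (d - t) 0 := by
  rcases eq_or_lt_of_le hd with h | h
  · simp [st, ← h, Real.sign_zero, max_eq_right, ht]
  · rw [st, Real.sign_of_pos h, abs_of_nonneg hd, one_mul]

lemma key0 (lamb m t u w : ℝ) (hlamb : 0 ≤ lamb) (hm : 0 ≤ m) (hu : 0 ≤ u)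
    (ht : |w| ≤ t) :
    (1/2)*(u - min m (max (u - lamb) 0))^2 + lamb * min m (max (u - lamb) 0)
      - max (max (u - lamb) 0 - m) 0 * (t - m)
      ≤ (1/2)*(u - w)^2 + lamb * |w| := by
  have hw1 : w ≤ |w| := le_abs_self w
  have hw0 : 0 ≤ |w| := abs_nonneg w
  set S := max (u - lamb) 0 with hS
  have hS0 : 0 ≤ S := le_max_right _ _
  rcases le_or_gt S m with hSm | hSm
  · rw [min_eq_right hSm, max_eq_right (by linarith)]
    rcases le_or_gt u lamb with hul | hul
    · have : S = 0 := max_eq_right (by linarith)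
      rw [this]
      nlinarith [sq_nonneg w, mul_le_mul_of_nonneg_left hw1 hu]
    · have : S = u - lamb := max_eq_left (by linarith)
      rw [this]
      nlinarith [sq_nonneg (u - w - lamb), mul_le_mul_of_nonneg_left hw1 hlamb]
  · have hpos : 0 < u - lamb := by
      by_contra hc
      push_neg at hc
      rw [hS, max_eq_right hc] at hSm
      linarith
    have hSu : S = u - lamb := by rw [hS]; exact max_eq_left (by linarith)
    rw [min_eq_left hSm.le, max_eq_left (by linarith)]
    have htw : 0 ≤ t - w := by linarith
    nlinarith [sq_nonneg (w - m), mul_le_mul_of_nonneg_left hw1 hlamb,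
      mul_nonneg (by linarith : (0:ℝ) ≤ S - m) htw]

lemma key (lamb m t u w : ℝ) (hlamb : 0 ≤ lamb) (hm : 0 ≤ m) (ht : |w| ≤ t) :
    (1/2)*(u - Real.sign u * min m (max (|u| - lamb) 0))^2
      + lamb * |Real.sign u * min m (max (|u| - lamb) 0)|
      - max (max (|u| - lamb) 0 - m) 0 * (t - m)
      ≤ (1/2)*(u - w)^2 + lamb * |w| := by
  have hmin : 0 ≤ min m (max (|u| - lamb) 0) := le_min hm (le_max_right _ _)
  rcases lt_trichotomy u 0 with hu | hu | hu
  · have h := key0 lamb m t (-u) (-w) hlamb hm (by linarith) (by rwa [abs_neg])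
    rw [Real.sign_of_neg hu, abs_of_neg hu]
    have e1 : (u - -1 * min m (max (-u - lamb) 0))^2
        = (-u - min m (max (-u - lamb) 0))^2 := by ring
    have e2 : |(-1 : ℝ) * min m (max (-u - lamb) 0)| = min m (max (-u - lamb) 0) := by
      rw [neg_one_mul, abs_neg, abs_of_nonneg (le_min hm (le_max_right _ _))]
    have h' : (1/2)*(-u - -w)^2 + lamb * |(-w)| = (1/2)*(u - w)^2 + lamb * |w| := by
      rw [abs_neg]; ring
    rw [e1, e2]
    exact h.trans (le_of_eq h')
  · subst hu
    have h1 : max (|(0:ℝ)| - lamb) 0 = 0 := by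
      rw [abs_zero]; exact max_eq_right (by linarith)
    rw [h1]
    have h2 : max ((0:ℝ) - m) 0 = 0 := max_eq_right (by linarith)
    rw [h2]
    simp only [Real.sign_zero, zero_mul, abs_zero, mul_zero, zero_sub, neg_sq, sub_zero,
      zero_add]
    nlinarith [sq_nonneg w, abs_nonneg w, mul_nonneg hlamb (abs_nonneg w), sq_nonneg (0 - w)]
  · have h := key0 lamb m t u w hlamb hm hu.le ht
    rw [Real.sign_of_pos hu, abs_of_pos hu, one_mul,
      abs_of_nonneg (le_min hm (le_max_right _ _))]
    exact h

lemma sumC {K : ℕ} (U : Fin K → ℝ) (σ : Equiv.Perm (Fin K))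
    (hsort : ∀ i j : Fin K, i ≤ j → |U (σ j)| ≤ |U (σ i)|)
    (lamb m : ℝ) (hlamb : 0 ≤ lamb) (hm : 0 ≤ m) (s : ℕ) (hs : s ≤ K)
    (hlow : st lamb (du U σ (s+1)) ≤ m)
    (hup : 0 < s → m < st lamb (du U σ s)) :
    ∑ j, max (max (|U j| - lamb) 0 - m) 0
      = (∑ i ∈ Finset.Icc 1 s, (du U σ i - lamb)) - s * m := by
  classical
  set G : ℕ → ℝ := fun i =>
    if h : i < K then max (max (|U (σ ⟨i, h⟩)| - lamb) 0 - m) 0 else 0 with hG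
  have e1 : ∑ j, max (max (|U j| - lamb) 0 - m) 0
      = ∑ i ∈ Finset.range K, G i := by
    rw [← Fin.sum_univ_eq_sum_range G K]
    rw [← Equiv.sum_comp σ (fun j => max (max (|U j| - lamb) 0 - m) 0)]
    apply Finset.sum_congr rfl
    intro j _
    simp only [hG, j.isLt, dif_pos, Fin.eta]
  have e2 : ∑ i ∈ Finset.range K, G i
      = (∑ i ∈ Finset.range s, G i) + ∑ i ∈ Finset.Ico s K, G i := by
    rw [Finset.range_eq_Ico, ← Finset.sum_Ico_consecutive _ (Nat.zero_le s) hs,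
      ← Finset.range_eq_Ico]
  have etail : ∑ i ∈ Finset.Ico s K, G i = 0 := by
    apply Finset.sum_eq_zero
    intro i hi
    rw [Finset.mem_Ico] at hi
    obtain ⟨hsi, hiK⟩ := hi
    have hsK : s < K := lt_of_le_of_lt hsi hiK
    have hdu : du U σ (s+1) = |U (σ ⟨s, hsK⟩)| := by
      rw [du, dif_pos (by omega : s + 1 - 1 < K)]
      rfl
    have hlow' : max (|U (σ ⟨s, hsK⟩)| - lamb) 0 ≤ m := by
      rw [← st_nonneg_arg lamb _ hlamb (abs_nonneg _), ← hdu]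
      exact hlow
    have hmono : |U (σ ⟨i, hiK⟩)| ≤ |U (σ ⟨s, hsK⟩)| :=
      hsort ⟨s, hsK⟩ ⟨i, hiK⟩ (by exact hsi)
    rw [hG]
    simp only [dif_pos hiK]
    apply max_eq_right
    have : max (|U (σ ⟨i, hiK⟩)| - lamb) 0 ≤ max (|U (σ ⟨s, hsK⟩)| - lamb) 0 :=
      max_le_max (by linarith) le_rfl
    linarith
  have ehead : ∀ i ∈ Finset.range s, G i = (du U σ (i+1) - lamb) - m := by
    intro i hi
    rw [Finset.mem_range] at hi
    have hiK : i < K := lt_of_lt_of_le hi hs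
    have hspos : 0 < s := Nat.pos_of_ne_zero (by omega)
    have hs1K : s - 1 < K := by omega
    have hdu : du U σ s = |U (σ ⟨s - 1, hs1K⟩)| := by rw [du, dif_pos hs1K]
    have hup' : m < max (|U (σ ⟨s - 1, hs1K⟩)| - lamb) 0 := by
      rw [← st_nonneg_arg lamb _ hlamb (abs_nonneg _), ← hdu]
      exact hup hspos
    have hmono : |U (σ ⟨s - 1, hs1K⟩)| ≤ |U (σ ⟨i, hiK⟩)| :=
      hsort ⟨i, hiK⟩ ⟨s - 1, hs1K⟩ (by simp; omega)
    have hSgt : m < max (|U (σ ⟨i, hiK⟩)| - lamb) 0 :=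
      lt_of_lt_of_le hup' (max_le_max (by linarith) le_rfl)
    have hpos : 0 < |U (σ ⟨i, hiK⟩)| - lamb := by
      by_contra hc
      push_neg at hc
      rw [max_eq_right hc] at hSgt
      linarith
    have hSeq : max (|U (σ ⟨i, hiK⟩)| - lamb) 0 = |U (σ ⟨i, hiK⟩)| - lamb :=
      max_eq_left hpos.le
    have hdu2 : du U σ (i+1) = |U (σ ⟨i, hiK⟩)| := by
      rw [du, dif_pos (by omega : i + 1 - 1 < K)]
      rfl
    rw [hG]
    simp only [dif_pos hiK]
    rw [hSeq, hdu2]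
    rw [max_eq_left (by rw [hSeq] at hSgt; linarith)]
  have e3 : ∑ i ∈ Finset.range s, G i
      = (∑ i ∈ Finset.range s, (du U σ (i+1) - lamb)) - s * m := by
    rw [Finset.sum_congr rfl ehead, Finset.sum_sub_distrib, Finset.sum_const,
      Finset.card_range, nsmul_eq_mul]
  have e4 : ∑ i ∈ Finset.Icc 1 s, (du U σ i - lamb)
      = ∑ i ∈ Finset.range s, (du U σ (i+1) - lamb) := by
    rw [← Finset.Ico_add_one_right_eq_Icc, Finset.sum_Ico_eq_sum_range]
    apply Finset.sum_congr rfl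
    intro i _
    rw [Nat.add_comm 1 i]
  rw [e1, e2, etail, e3, e4]
  ring

lemma radial (lam M N r rho m C T a : ℝ) (s : ℕ)
    (hrho0 : 0 ≤ rho) (hr0 : 0 ≤ r) (hden : (0:ℝ) < 1 + (s:ℝ) * M ^ 2)
    (hm : m = M * r) (hC : C = T - (s:ℝ) * m) (ha : a = lam - M * T)
    (hrEq : r * (1 + (s:ℝ) * M ^ 2) = max (N - a) 0) :
    (1/2)*(N - r)^2 + lam * r ≤ (1/2)*(N - rho)^2 + lam * rho - C * (M * rho - m) := by
  rcases le_or_gt a N with hcase | hcase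
  · have hreq : r * (1 + (s:ℝ) * M ^ 2) = N - a := by
      rw [hrEq, max_eq_left (by linarith)]
    have hL : lam - M * C = N - r := by
      rw [hC, hm]
      linear_combination hreq - ha
    have hCe : C * (M * rho - m) = (lam - N + r) * (rho - r) := by
      rw [hm]
      linear_combination (-(rho - r)) * hL
    rw [hCe]
    nlinarith [sq_nonneg (rho - r)]
  · have h0 : r * (1 + (s:ℝ) * M ^ 2) = 0 := by
      rw [hrEq, max_eq_right (by linarith)]
    have hr00 : r = 0 := by
      rcases mul_eq_zero.1 h0 with h | h
      · exact h
      · linarith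
    have hMC : M * C = lam - a := by rw [hC, hm, hr00, ha]; ring
    have hCe : C * (M * rho - m) = (lam - a) * rho := by
      rw [hm, hr00]
      linear_combination rho * hMC
    rw [hr00, hCe]
    nlinarith [mul_nonneg (by linarith : (0:ℝ) ≤ a - N) hrho0, sq_nonneg rho]

/-- If `s* ∈ {0,…,K}` satisfies `S_λ̄(|U_(s*+1)|) ≤ M‖b_{s*}‖₂ < S_λ̄(|U_(s*)|)` (the upper
bound being the convention `+∞` when `s* = 0`), then `b = b_{s*}` together with
`W_j = sign(U_j)·min{M‖b_{s*}‖₂, S_λ̄(|U_j|)}` is a global minimizer of problem (P). -/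
theorem stmt1 (k K : ℕ) (hk : 1 ≤ k) (hK : 1 ≤ K)
    (lam lamb M : ℝ) (hlam : 0 ≤ lam) (hlamb : 0 ≤ lamb) (hM : 0 < M)
    (v : Fin k → ℝ) (hv : v ≠ 0) (U : Fin K → ℝ)
    (σ : Equiv.Perm (Fin K))
    (hsort : ∀ i j : Fin K, i ≤ j → |U (σ j)| ≤ |U (σ i)|)
    (sstar : ℕ) (hs : sstar ≤ K)
    (hlow : st lamb (du U σ (sstar + 1)) ≤ M * l2 (bvec U σ lam lamb M v sstar))
    (hup : 0 < sstar → M * l2 (bvec U σ lam lamb M v sstar) < st lamb (du U σ sstar)) :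
    (∀ j, |Real.sign (U j) * min (M * l2 (bvec U σ lam lamb M v sstar)) (st lamb |U j|)|
        ≤ M * l2 (bvec U σ lam lamb M v sstar)) ∧
    ∀ (b : Fin k → ℝ) (W : Fin K → ℝ), (∀ j, |W j| ≤ M * l2 b) →
      objP lam lamb v U (bvec U σ lam lamb M v sstar)
          (fun j => Real.sign (U j) *
            min (M * l2 (bvec U σ lam lamb M v sstar)) (st lamb |U j|))
        ≤ objP lam lamb v U b W := by
  have hst : ∀ x : ℝ, st lamb |x| = max (|x| - lamb) 0 :=
    fun x => st_nonneg_arg lamb _ hlamb (abs_nonneg _)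
  set r := l2 (bvec U σ lam lamb M v sstar) with hrdef
  have hr0 : 0 ≤ r := l2_nonneg' _
  set m := M * r with hmdef
  have hm0 : 0 ≤ m := mul_nonneg hM.le hr0
  have hN : 0 < l2 v := l2_pos v hv
  set N := l2 v with hNdef
  constructor
  · intro j
    have h3 : 0 ≤ min m (st lamb |U j|) := by
      refine le_min hm0 ?_
      rw [hst]
      exact le_max_right _ _
    rw [abs_mul, abs_of_nonneg h3]
    have h1 : |Real.sign (U j)| ≤ 1 := by
      rcases lt_trichotomy (U j) 0 with h | h | h
      · rw [Real.sign_of_neg h]; norm_num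
      · rw [h, Real.sign_zero]; norm_num
      · rw [Real.sign_of_pos h]; norm_num
    calc |Real.sign (U j)| * min m (st lamb |U j|)
        ≤ 1 * min m (st lamb |U j|) := by
          exact mul_le_mul_of_nonneg_right h1 h3
      _ = min m (st lamb |U j|) := one_mul _
      _ ≤ m := min_le_left _ _
  · intro b W hW
    set ρ := l2 b with hρdef
    have hρ0 : 0 ≤ ρ := l2_nonneg' _
    -- sum identity for C
    set T : ℝ := ∑ i ∈ Finset.Icc 1 sstar, (du U σ i - lamb) with hTdef
    set C : ℝ := ∑ j, max (max (|U j| - lamb) 0 - m) 0 with hCdef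
    have hC : C = T - sstar * m :=
      sumC U σ hsort lamb m hlamb hm0 sstar hs hlow hup
    -- b* as a scalar multiple of v
    set a : ℝ := lam - M * T with hadef
    have haeq : aseq U σ lam lamb M sstar = a := rfl
    set c0 : ℝ := (1 / (1 + (sstar:ℝ) * M ^ 2)) * max (1 - a / N) 0 with hc0def
    have hden : (0:ℝ) < 1 + (sstar:ℝ) * M ^ 2 := by positivity
    have hc00 : 0 ≤ c0 := by
      apply mul_nonneg
      · positivity
      · exact le_max_right _ _
    clear_value T C a c0
    have hbvec : bvec U σ lam lamb M v sstar = fun i => c0 * v i := by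
      funext i
      rw [bvec, haeq, ← hNdef, hc0def]
    have hrc : r = c0 * N := by rw [hrdef, hbvec, l2_smul _ _ hc00, hNdef]
    have hrEq : r * (1 + (sstar:ℝ) * M ^ 2) = max (N - a) 0 := by
      have h1 : max (1 - a / N) 0 * N = max (N - a) 0 := by
        rw [max_mul_of_nonneg _ _ hN.le, zero_mul, sub_mul, one_mul,
          div_mul_cancel₀ _ (ne_of_gt hN)]
      have h2 : (1 / (1 + (sstar:ℝ) * M ^ 2)) * (1 + (sstar:ℝ) * M ^ 2) = 1 := by
        field_simp
      calc r * (1 + (sstar:ℝ) * M ^ 2)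
          = (1 / (1 + (sstar:ℝ) * M ^ 2)) * (1 + (sstar:ℝ) * M ^ 2)
            * (max (1 - a / N) 0 * N) := by rw [hrc, hc0def]; ring
        _ = max (1 - a / N) 0 * N := by rw [h2, one_mul]
        _ = max (N - a) 0 := h1
    clear_value r m N ρ
    have hv2 : ∑ i, (v i)^2 = N^2 := by rw [hNdef, l2_sq]
    have hb2 : ∑ i, (b i)^2 = ρ^2 := by rw [hρdef, l2_sq]
    have hCS : ∑ i, v i * b i ≤ N * ρ := by
      rw [hNdef, hρdef]; exact cauchy v b
    have hfirst : (1/2)*(N - ρ)^2 ≤ (1/2) * ∑ i, (v i - b i)^2 := by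
      have hexp : ∑ i, (v i - b i)^2
          = (∑ i, (v i)^2) - 2 * (∑ i, v i * b i) + ∑ i, (b i)^2 := by
        rw [Finset.mul_sum, ← Finset.sum_sub_distrib, ← Finset.sum_add_distrib]
        apply Finset.sum_congr rfl
        intro i _
        ring
      rw [hexp, hv2, hb2]
      nlinarith [hCS]
    -- star first term
    have hvb : ∑ i, (v i - bvec U σ lam lamb M v sstar i)^2 = (N - r)^2 := by
      rw [hbvec]
      have hterm : ∀ i, (v i - c0 * v i)^2 = (1 - c0)^2 * (v i)^2 := fun i => by ring
      rw [Finset.sum_congr rfl (fun i _ => hterm i), ← Finset.mul_sum, hv2, hrc]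
      ring
    -- per-coordinate inequality, summed
    have hkey : ∀ j ∈ Finset.univ,
        (1/2)*(U j - Real.sign (U j) * min m (st lamb |U j|))^2
          + lamb * |Real.sign (U j) * min m (st lamb |U j|)|
          - max (max (|U j| - lamb) 0 - m) 0 * (M * ρ - m)
        ≤ (1/2)*(U j - W j)^2 + lamb * |W j| := by
      intro j _
      rw [hst]
      exact key lamb m (M * ρ) (U j) (W j) hlamb hm0 (hW j)
    have hsum := Finset.sum_le_sum hkey
    rw [Finset.sum_sub_distrib, ← Finset.sum_mul, ← hCdef] at hsum
    -- final comparison of the radial parts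
    have hradial := radial lam M N r ρ m C T a sstar hρ0 hr0 hden hmdef hC hadef hrEq
    -- assemble
    simp only [objP, l1]
    rw [hvb, ← hrdef, ← hρdef]
    have hWsum : (1/2) * (∑ j, (U j - W j)^2) + lamb * ∑ j, |W j|
        = ∑ j, ((1/2)*(U j - W j)^2 + lamb * |W j|) := by
      rw [Finset.sum_add_distrib, ← Finset.mul_sum, ← Finset.mul_sum]
    have hWstarsum : (1/2) * (∑ j, (U j - Real.sign (U j) * min m (st lamb |U j|))^2)
          + lamb * ∑ j, |Real.sign (U j) * min m (st lamb |U j|)|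
        = ∑ j, ((1/2)*(U j - Real.sign (U j) * min m (st lamb |U j|))^2
            + lamb * |Real.sign (U j) * min m (st lamb |U j|)|) := by
      rw [Finset.sum_add_distrib, ← Finset.mul_sum, ← Finset.mul_sum]
    linarith only [hfirst, hsum, hradial, hWsum, hWstarsum]
end

section
/- Assume v ≠ 0. There exists a unique s* ∈ {0,1,...,K} such that S_λ̄(|U_(s*+1)|) ≤ M‖b_{s*}‖₂ < S_λ̄(|U_(s*)|). -/
lemma du_nonneg {K : ℕ} (U : Fin K → ℝ) (σ : Equiv.Perm (Fin K)) (s : ℕ) :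
    0 ≤ du U σ s := by
  unfold du; split
  · exact abs_nonneg _
  · exact le_refl 0

lemma key_arith (M x c s : ℝ) (hM : 0 < M) (hc : 0 ≤ c) (hs : 0 ≤ s) :
    (M * max (x + M * c) 0 / (1 + (s + 1) * M ^ 2) < c ↔
      M * max x 0 / (1 + s * M ^ 2) < c) := by
  have h1 : (0:ℝ) < 1 + s * M ^ 2 := by positivity
  have h2 : (0:ℝ) < 1 + (s + 1) * M ^ 2 := by positivity
  rw [div_lt_iff₀ h2, div_lt_iff₀ h1]
  rcases le_or_gt x 0 with hx | hx
  · rcases le_or_gt (x + M * c) 0 with hxc | hxc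
    · rw [max_eq_right hxc, max_eq_right hx]
      constructor <;> intro h <;> nlinarith
    · rw [max_eq_left hxc.le, max_eq_right hx]
      have hcpos : 0 < c := by nlinarith
      constructor <;> intro h <;> nlinarith [mul_pos hcpos h1,
        mul_nonpos_of_nonneg_of_nonpos hM.le hx]
  · have hxc : 0 < x + M * c := by nlinarith
    rw [max_eq_left hxc.le, max_eq_left hx.le]
    constructor <;> intro h <;> nlinarith

/-- Assuming `v ≠ 0`, there exists a unique `s* ∈ {0,1,…,K}` such that
`S_λ̄(|U_(s*+1)|) ≤ M‖b_{s*}‖₂ < S_λ̄(|U_(s*)|)` (the upper bound being the convention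
`+∞`, i.e. vacuous, when `s* = 0`). -/
theorem stmt6 (k K : ℕ) (hk : 1 ≤ k) (hK : 1 ≤ K)
    (lam lamb M : ℝ) (hlam : 0 ≤ lam) (hlamb : 0 ≤ lamb) (hM : 0 < M)
    (v : Fin k → ℝ) (hv : v ≠ 0) (U : Fin K → ℝ)
    (σ : Equiv.Perm (Fin K))
    (hsort : ∀ i j : Fin K, i ≤ j → |U (σ j)| ≤ |U (σ i)|) :
    ∃! s : ℕ, s ≤ K ∧
      st lamb (du U σ (s + 1)) ≤ M * l2 (bvec U σ lam lamb M v s) ∧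
      (0 < s → M * l2 (bvec U σ lam lamb M v s) < st lamb (du U σ s)) := by
  classical
  -- positivity of the norm of v
  have hn : 0 < l2 v := by
    obtain ⟨i, hi⟩ : ∃ i, v i ≠ 0 := by
      by_contra h; push_neg at h; exact hv (funext h)
    have hsum : 0 < ∑ j, (v j) ^ 2 :=
      Finset.sum_pos' (fun j _ => sq_nonneg _) ⟨i, Finset.mem_univ i, by positivity⟩
    exact Real.sqrt_pos.mpr hsum
  set n : ℝ := l2 v with hndef
  -- soft-thresholding of nonnegative inputs
  have hst : ∀ x : ℝ, 0 ≤ x → st lamb x = max (x - lamb) 0 := by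
    intro x hx
    rcases hx.eq_or_lt with h | h
    · rw [st, ← h, Real.sign_zero, zero_mul]
      exact (max_eq_right (by linarith : (0:ℝ) - lamb ≤ 0)).symm
    · rw [st, Real.sign_of_pos h, abs_of_pos h, one_mul]
  -- the D and F sequences
  set D : ℕ → ℝ := fun s => max (du U σ s - lamb) 0 with hDdef
  set F : ℕ → ℝ := fun s =>
    M * max (n - aseq U σ lam lamb M s) 0 / (1 + (s : ℝ) * M ^ 2) with hFdef
  have hFnonneg : ∀ s, 0 ≤ F s := by
    intro s
    exact div_nonneg (mul_nonneg hM.le (le_max_right _ _)) (by positivity)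
  -- translation of st conditions
  have hstD : ∀ s : ℕ, st lamb (du U σ s) = D s := fun s => hst _ (du_nonneg U σ s)
  -- l2 of a scalar multiple
  have hl2 : ∀ c : ℝ, 0 ≤ c → l2 (fun i => c * v i) = c * n := by
    intro c hc
    unfold l2
    have h1 : ∑ i, (c * v i) ^ 2 = c ^ 2 * ∑ i, (v i) ^ 2 := by
      rw [Finset.mul_sum]
      exact Finset.sum_congr rfl fun i _ => by ring
    rw [h1, Real.sqrt_mul (sq_nonneg c), Real.sqrt_sq hc]
    rfl
  -- translation of the l2 conditions
  have hMF : ∀ s : ℕ, M * l2 (bvec U σ lam lamb M v s) = F s := by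
    intro s
    have hden : (0:ℝ) < 1 + (s:ℝ) * M ^ 2 := by positivity
    have hc : 0 ≤ (1 / (1 + (s:ℝ) * M ^ 2)) * max (1 - aseq U σ lam lamb M s / n) 0 := by
      positivity
    have hb : bvec U σ lam lamb M v s =
        fun i => ((1 / (1 + (s:ℝ) * M ^ 2)) * max (1 - aseq U σ lam lamb M s / n) 0) * v i :=
      rfl
    rw [hb, hl2 _ hc]
    have hmax : max (1 - aseq U σ lam lamb M s / n) 0 * n
        = max (n - aseq U σ lam lamb M s) 0 := by
      rw [max_mul_of_nonneg _ _ hn.le, zero_mul]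
      congr 1
      field_simp
    rw [hFdef]
    rw [mul_assoc, hmax]
    field_simp
  -- recurrence for aseq
  have hA : ∀ s : ℕ, aseq U σ lam lamb M (s+1)
      = aseq U σ lam lamb M s - M * (du U σ (s+1) - lamb) := by
    intro s
    unfold aseq
    rw [Finset.sum_Icc_succ_top (Nat.le_add_left 1 s)]
    ring
  -- monotonicity of du
  have hdu : ∀ s : ℕ, 1 ≤ s → du U σ (s+1) ≤ du U σ s := by
    intro s hs
    unfold du
    by_cases h1 : s + 1 - 1 < K
    · rw [dif_pos h1]
      have h2 : s - 1 < K := by omega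
      rw [dif_pos h2]
      exact hsort ⟨s - 1, h2⟩ ⟨s + 1 - 1, h1⟩ (by simp [Fin.le_def])
    · rw [dif_neg h1]
      split
      · exact abs_nonneg _
      · exact le_refl 0
  have hDmono : ∀ s : ℕ, 1 ≤ s → D (s+1) ≤ D s := by
    intro s hs
    exact max_le_max (sub_le_sub_right (hdu s hs) lamb) le_rfl
  -- key equivalence
  have key : ∀ s : ℕ, (F (s+1) < D (s+1) ↔ F s < D (s+1)) := by
    intro s
    rcases le_or_gt (du U σ (s+1) - lamb) 0 with h | h
    · have hD0 : D (s+1) = 0 := max_eq_right h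
      rw [hD0]
      simp [not_lt.2 (hFnonneg (s+1)), not_lt.2 (hFnonneg s)]
    · have hD1 : D (s+1) = du U σ (s+1) - lamb := max_eq_left h.le
      rw [hD1]
      have hrw : n - aseq U σ lam lamb M (s+1)
          = (n - aseq U σ lam lamb M s) + M * (du U σ (s+1) - lamb) := by
        rw [hA s]; ring
      have hcast : ((s+1 : ℕ) : ℝ) = (s : ℝ) + 1 := by push_cast; ring
      have := key_arith M (n - aseq U σ lam lamb M s) (du U σ (s+1) - lamb) (s : ℝ)
        hM h.le (Nat.cast_nonneg s)
      rw [hFdef]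
      simp only [hrw, hcast]
      exact this
  -- the boundary case
  have hduK : du U σ (K+1) = 0 := by
    unfold du
    rw [dif_neg (by omega)]
  have hPK : D (K+1) ≤ F K := by
    have : D (K+1) = 0 := by
      rw [hDdef]
      simp only [hduK]
      exact max_eq_right (by linarith)
    rw [this]; exact hFnonneg K
  -- least crossing point
  have hex : ∃ s : ℕ, D (s+1) ≤ F s := ⟨K, hPK⟩
  set s0 : ℕ := Nat.find hex with hs0def
  have hP0 : D (s0+1) ≤ F s0 := Nat.find_spec hex
  have hmin : ∀ m, m < s0 → ¬ (D (m+1) ≤ F m) := fun m hm => Nat.find_min hex hm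
  have hs0K : s0 ≤ K := Nat.find_min' hex hPK
  -- monotonicity of the predicate
  have Pmono : ∀ s : ℕ, D (s+1) ≤ F s → D (s+1+1) ≤ F (s+1) := by
    intro s hPs
    rcases le_or_gt (D (s+1)) (F (s+1)) with h | h
    · exact le_trans (hDmono (s+1) (by omega)) h
    · exact absurd hPs (not_le.2 ((key s).1 h))
  have Pall : ∀ m, s0 ≤ m → D (m+1) ≤ F m := by
    intro m hm
    induction m, hm using Nat.le_induction with
    | base => exact hP0
    | succ m hm ih => exact Pmono m ih
  refine ⟨s0, ⟨hs0K, ?_, ?_⟩, ?_⟩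
  · rw [hstD, hMF]; exact hP0
  · intro hpos
    rw [hstD, hMF]
    obtain ⟨t, ht⟩ : ∃ t, s0 = t + 1 := ⟨s0 - 1, by omega⟩
    have h1 : ¬ (D (t+1) ≤ F t) := hmin t (by omega)
    rw [ht]
    exact (key t).2 (not_le.1 h1)
  · rintro s ⟨hsK, h1, h2⟩
    rw [hstD, hMF] at h1
    have hle : s0 ≤ s := Nat.find_min' hex h1
    rcases hle.eq_or_lt with h | h
    · exact h.symm
    · exfalso
      obtain ⟨t, rfl⟩ : ∃ t, s = t + 1 := ⟨s - 1, by omega⟩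
      have hPt : D (t+1) ≤ F t := Pall t (by omega)
      have hQ : F (t+1) < D (t+1) := by
        have := h2 (by omega)
        rwa [hstD, hMF] at this
      exact absurd hPt (not_le.2 ((key t).1 hQ))
end
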